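/- arXiv:2206.11991 — 9 statements merged into one kernel-verified Lean document; each statement's English description precedes it below -/
import Mathlib

section
/- Let L and R be nonempty strings of digits such that the last digit of L is 0 and the first digit of R is not 0. Then the string S = L ++ R splits into a compound of L and R: for every natural number n, the n-th descendant of L ++ R equals the concatenation of the n-th descendant of L with the n-th descendant of R, i.e. say^[n](L ++ R) = say^[n](L) ++ say^[n](R). -/
/-- Replace a maximal run `d^n` (given as a nonempty constant list) by `n^n d`:
the base-`b` digits of `n` (most significant first), concatenated `n` times,
followed by the single digit `d`. -/
def sayRun {b : ℕ} : List (Fin b) → List (Fin b)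
  | [] => []
  | d :: t =>
      (List.replicate (t.length + 1)
        ((Nat.digits b (t.length + 1)).reverse.map
          (fun k => (⟨k % b, Nat.mod_lt k d.pos⟩ : Fin b)))).flatten ++ [d]

/-- The stuttering say-what-you-see operation: decompose a string into its
maximal runs and replace each run `d^n` by `n^n d`. -/
def say {b : ℕ} (S : List (Fin b)) : List (Fin b) :=
  ((S.splitBy (· == ·)).map sayRun).flatten

namespace Stutter

open List

theorem loop_eq_append {α : Type*} {r : α → α → Bool} {l : List α} {a : α} {g : List α}
    (gs : List (List α)) : splitBy.loop r l a g gs = gs.reverse ++ splitBy.loop r l a g [] := by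
  induction l generalizing a g gs with
  | nil => simp [splitBy.loop]
  | cons b l IH =>
    simp_rw [splitBy.loop]
    split <;> rw [IH]
    conv_rhs => rw [IH]
    simp

theorem loop_append {α : Type*} {r : α → α → Bool} : ∀ (xs : List α) (ag : α) (g : List α)
    (b : α) (ys : List α), r ((ag :: xs).getLast (by simp)) b = false →
    splitBy.loop r (xs ++ b :: ys) ag g [] =
      splitBy.loop r xs ag g [] ++ splitBy.loop r ys b [] [] := by
  intro xs
  induction xs with
  | nil =>
    intro ag g b ys h
    simp only [List.getLast_singleton] at h
    simp only [nil_append]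
    rw [splitBy.loop, h]
    rw [loop_eq_append [(ag :: g).reverse]]
    simp [splitBy.loop]
  | cons c xs IH =>
    intro ag g b ys h
    rw [getLast_cons (by simp)] at h
    simp only [cons_append]
    rw [splitBy.loop, splitBy.loop]
    cases hr : r ag c with
    | true => exact IH c (ag :: g) b ys h
    | false =>
      rw [loop_eq_append [(ag :: g).reverse], IH c [] b ys h,
        loop_eq_append (gs := [(ag :: g).reverse]) (l := xs)]
      simp

theorem splitBy_append {α : Type*} (r : α → α → Bool) (l₁ l₂ : List α)
    (h₁ : l₁ ≠ []) (h₂ : l₂ ≠ [])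
    (h : r (l₁.getLast h₁) (l₂.head h₂) = false) :
    splitBy r (l₁ ++ l₂) = splitBy r l₁ ++ splitBy r l₂ := by
  obtain ⟨a, xs, rfl⟩ := exists_cons_of_ne_nil h₁
  obtain ⟨b, ys, rfl⟩ := exists_cons_of_ne_nil h₂
  simp only [head_cons] at h
  show splitBy.loop r (xs ++ b :: ys) a [] [] = _
  rw [loop_append xs a [] b ys h]
  rfl

theorem say_append {b : ℕ} (L R : List (Fin b)) (hL : L ≠ []) (hR : R ≠ [])
    (h : L.getLast hL ≠ R.head hR) : say (L ++ R) = say L ++ say R := by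
  unfold say
  rw [splitBy_append _ L R hL hR (by simpa using h), map_append, flatten_append]

theorem splitBy_ne_nil {α : Type*} (r : α → α → Bool) (l : List α) (h : l ≠ []) :
    splitBy r l ≠ [] := by
  intro hc
  apply h
  rw [← flatten_splitBy r l, hc, flatten_nil]

theorem chain'_eq_replicate {α : Type*} : ∀ (d : α) (t : List α),
    Chain' (· = ·) (d :: t) → d :: t = replicate (t.length + 1) d := by
  intro d t
  induction t generalizing d with
  | nil => intro; rfl
  | cons e t IH =>
    intro h
    rw [Chain', isChain_cons_cons] at h
    obtain ⟨rfl, h2⟩ := h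
    rw [length_cons, replicate_succ]
    rw [IH d h2]

theorem run_const {α : Type*} [BEq α] [LawfulBEq α] {S G : List α}
    (hG : G ∈ S.splitBy (· == ·)) : G = replicate G.length (G.head (ne_nil_of_mem_splitBy hG)) := by
  have hc := isChain_of_mem_splitBy hG
  obtain ⟨d, t, rfl⟩ := exists_cons_of_ne_nil (ne_nil_of_mem_splitBy hG)
  have : Chain' (· = ·) (d :: t) := by
    refine hc.imp ?_
    intro a b hab
    exact eq_of_beq hab
  simpa using chain'_eq_replicate d t this

theorem sayRun_ne_nil {b : ℕ} {G : List (Fin b)} (h : G ≠ []) : sayRun G ≠ [] := by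
  obtain ⟨d, t, rfl⟩ := exists_cons_of_ne_nil h
  simp [sayRun]

theorem say_ne_nil {b : ℕ} {S : List (Fin b)} (h : S ≠ []) : say S ≠ [] := by
  unfold say
  obtain ⟨G, Gs, hGs⟩ := exists_cons_of_ne_nil (splitBy_ne_nil (· == ·) S h)
  have hG : G ≠ [] := ne_nil_of_mem_splitBy (hGs ▸ (mem_cons_self : G ∈ G :: Gs))
  rw [hGs, map_cons, flatten_cons]
  exact append_ne_nil_of_left_ne_nil (sayRun_ne_nil hG) _

theorem sayRun_getLast? {b : ℕ} {S G : List (Fin b)} [NeZero b]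
    (hG : G ∈ S.splitBy (· == ·)) : (sayRun G).getLast? = G.getLast? := by
  have hne := ne_nil_of_mem_splitBy hG
  have hconst := run_const hG
  obtain ⟨d, t, rfl⟩ := exists_cons_of_ne_nil hne
  simp only [head_cons] at hconst
  rw [sayRun, getLast?_append]
  simp only [getLast?_singleton, Option.some_or]
  conv_rhs => rw [hconst]
  rw [getLast?_eq_getLast (by simp), getLast_replicate]

theorem say_getLast? {b : ℕ} [NeZero b] (S : List (Fin b)) : (say S).getLast? = S.getLast? := by
  unfold say
  conv_rhs => rw [← flatten_splitBy (· == ·) S]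
  generalize hGs : S.splitBy (· == ·) = Gs
  have hmem : ∀ G ∈ Gs, (sayRun G).getLast? = G.getLast? ∧ G ≠ [] := by
    intro G hG
    rw [← hGs] at hG
    exact ⟨sayRun_getLast? hG, ne_nil_of_mem_splitBy hG⟩
  clear hGs
  induction Gs with
  | nil => rfl
  | cons G Gs IH =>
    simp only [map_cons, flatten_cons, getLast?_append]
    rw [IH (fun G hG => hmem G (mem_cons_of_mem _ hG)),
      (hmem G mem_cons_self).1]

theorem sayRun_head? {b : ℕ} (hb : 1 < b) (d : Fin b) (t : List (Fin b)) :
    ∃ k : Fin b, (sayRun (d :: t)).head? = some k ∧ (k : ℕ) ≠ 0 := by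
  set n := t.length + 1 with hn
  set f : ℕ → Fin b := fun k => (⟨k % b, Nat.mod_lt k d.pos⟩ : Fin b) with hf
  have hdig : Nat.digits b n ≠ [] := Nat.digits_ne_nil_iff_ne_zero.mpr (by omega)
  set k0 := (Nat.digits b n).getLast hdig with hk0
  have hk0ne : k0 ≠ 0 := Nat.getLast_digit_ne_zero b (by omega)
  have hk0lt : k0 < b := Nat.digits_lt_base hb (getLast_mem hdig)
  refine ⟨f k0, ?_, ?_⟩
  · show ((List.replicate n ((Nat.digits b n).reverse.map f)).flatten ++ [d]).head? = _
    rw [hn, replicate_succ, flatten_cons]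
    rw [append_assoc, head?_append, head?_map, head?_reverse,
      getLast?_eq_getLast hdig, ← hk0]
    rfl
  · show k0 % b ≠ 0
    rwa [Nat.mod_eq_of_lt hk0lt]

theorem say_head? {b : ℕ} (S : List (Fin b)) (h : S ≠ []) (hb : 1 < b) :
    ∃ k : Fin b, (say S).head? = some k ∧ (k : ℕ) ≠ 0 := by
  unfold say
  obtain ⟨G, Gs, hGs⟩ := exists_cons_of_ne_nil (splitBy_ne_nil (· == ·) S h)
  have hG : G ≠ [] := ne_nil_of_mem_splitBy (hGs ▸ (mem_cons_self : G ∈ G :: Gs))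
  obtain ⟨d, t, rfl⟩ := exists_cons_of_ne_nil hG
  obtain ⟨k, hk, hk0⟩ := sayRun_head? hb d t
  refine ⟨k, ?_, hk0⟩
  rw [hGs, map_cons, flatten_cons, head?_append, hk]
  rfl

end Stutter

theorem stuttering_splitting (L R : List (Fin 10)) (hL : L ≠ []) (hR : R ≠ [])
    (hL0 : L.getLast hL = 0) (hR0 : R.head hR ≠ 0) (n : ℕ) :
    say^[n] (L ++ R) = say^[n] L ++ say^[n] R := by
  induction n generalizing L R with
  | zero => simp
  | succ n IH =>
    rw [Function.iterate_succ_apply, Function.iterate_succ_apply,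
      Function.iterate_succ_apply,
      Stutter.say_append L R hL hR (by rw [hL0]; exact fun h => hR0 h.symm)]
    have hL' : say L ≠ [] := Stutter.say_ne_nil hL
    have hR' : say R ≠ [] := Stutter.say_ne_nil hR
    apply IH (say L) (say R) hL' hR'
    · have := Stutter.say_getLast? (b := 10) L
      rw [List.getLast?_eq_getLast hL', List.getLast?_eq_getLast hL, hL0] at this
      exact Option.some_injective _ this
    · obtain ⟨k, hk, hk0⟩ := Stutter.say_head? R hR (by norm_num)
      rw [List.head?_eq_head hR'] at hk
      rw [Option.some_injective _ hk]
      exact fun hc => hk0 (by simpa using congrArg Fin.val hc)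
end

section
/- Let S be a nonempty string of digits whose last digit is 0. Then for every natural number n, the n-th descendant say^[n](S) is nonempty and its last digit is 0. -/
lemma head_eq_getLast_of_chain' {b : ℕ} : ∀ (m : List (Fin b)) (hm : m ≠ [])
    (_ : m.Chain' fun x y => (x == y) = true), m.head hm = m.getLast hm
  | [d], _, _ => rfl
  | d :: e :: t, _, hc => by
      rw [List.Chain', List.isChain_cons_cons] at hc
      have := head_eq_getLast_of_chain' (e :: t) (List.cons_ne_nil _ _) hc.2
      simp only [List.head_cons] at this ⊢
      rw [List.getLast_cons (List.cons_ne_nil _ _), ← this]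
      simpa using hc.1

lemma sayRun_getLast {b : ℕ} (g : List (Fin b)) (hg : g ≠ []) :
    ∃ h : sayRun g ≠ [], (sayRun g).getLast h = g.head hg := by
  cases g with
  | nil => exact absurd rfl hg
  | cons d t =>
    refine ⟨by simp [sayRun], ?_⟩
    simp [sayRun]

lemma say_getLast {b : ℕ} (S : List (Fin b)) (hS : S ≠ []) :
    ∃ h : say S ≠ [], (say S).getLast h = S.getLast hS := by
  set G := S.splitBy (· == ·) with hG
  have hflat : G.flatten = S := List.flatten_splitBy _ _
  have hGne : G ≠ [] := by
    intro h; rw [h] at hflat; exact hS hflat.symm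
  set g := G.getLast hGne with hg
  have hgmem : g ∈ G := List.getLast_mem hGne
  have hgne : g ≠ [] := List.ne_nil_of_mem_splitBy hgmem
  have hchain : g.Chain' fun x y => (x == y) = true := List.isChain_of_mem_splitBy hgmem
  -- decompose G = G.dropLast ++ [g]
  have hGdec : G = G.dropLast ++ [g] := (List.dropLast_append_getLast hGne).symm
  obtain ⟨hrn, hrl⟩ := sayRun_getLast g hgne
  have hsay : say S = (G.dropLast.map sayRun).flatten ++ sayRun g := by
    rw [say, ← hG]
    conv_lhs => rw [hGdec]
    simp
  have hne : say S ≠ [] := by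
    rw [hsay]; intro h; exact hrn (List.append_eq_nil_iff.mp h).2
  refine ⟨hne, ?_⟩
  have h1 : (say S).getLast hne = (sayRun g).getLast hrn := by
    rw [List.getLast_congr hne (hsay ▸ hne) hsay, List.getLast_append_of_ne_nil _ hrn]
  have h2 : S.getLast hS = g.getLast hgne := by
    have hS2 : S = G.dropLast.flatten ++ g := by
      conv_lhs => rw [← hflat, hGdec]
      simp
    rw [List.getLast_congr hS (hS2 ▸ hS) hS2, List.getLast_append_of_ne_nil _ hgne]
  rw [h1, hrl, h2, head_eq_getLast_of_chain' g hgne hchain]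

theorem descendant_ends_in_zero (S : List (Fin 10)) (hS : S ≠ [])
    (h0 : S.getLast hS = 0) (n : ℕ) :
    ∃ h : say^[n] S ≠ [], (say^[n] S).getLast h = 0 := by
  induction n with
  | zero => exact ⟨hS, h0⟩
  | succ n ih =>
    obtain ⟨hn, hl⟩ := ih
    obtain ⟨hn', hl'⟩ := say_getLast _ hn
    rw [Function.iterate_succ_apply']
    exact ⟨hn', by rw [hl', hl]⟩
end

section
/- Let S be a nonempty string of digits. Then for every natural number n ≥ 1, the n-th descendant say^[n](S) is nonempty and its first digit is not 0 (the first digit of a descendant is always the leading digit of a decimal representation of a positive integer). -/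
lemma sayRun_ne_nil {g : List (Fin 10)} (hg : g ≠ []) : sayRun g ≠ [] := by
  obtain ⟨d, t, rfl⟩ := List.exists_cons_of_ne_nil hg
  simp [sayRun]

lemma say_ne_nil {T : List (Fin 10)} (hT : T ≠ []) : say T ≠ [] := by
  have hflat : (T.splitBy (· == ·)).flatten = T := List.flatten_splitBy _ _
  have hsp : T.splitBy (· == ·) ≠ [] := by
    intro h; rw [h] at hflat; exact hT hflat.symm
  obtain ⟨g, gs, hgs⟩ := List.exists_cons_of_ne_nil hsp
  have hg : g ≠ [] := List.ne_nil_of_mem_splitBy (hgs ▸ List.mem_cons_self (a := g) (l := gs))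
  simp only [say, hgs, List.map_cons, List.flatten_cons]
  exact fun h => sayRun_ne_nil hg (List.append_eq_nil_iff.mp h).1

lemma say_head {T : List (Fin 10)} (hT : T ≠ []) :
    ∃ h : say T ≠ [], (say T).head h ≠ 0 := by
  have hflat : (T.splitBy (· == ·)).flatten = T := List.flatten_splitBy _ _
  have hsp : T.splitBy (· == ·) ≠ [] := by
    intro h; rw [h] at hflat; exact hT hflat.symm
  obtain ⟨g, gs, hgs⟩ := List.exists_cons_of_ne_nil hsp
  have hg : g ≠ [] := List.ne_nil_of_mem_splitBy (hgs ▸ List.mem_cons_self (a := g) (l := gs))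
  obtain ⟨d, t, rfl⟩ := List.exists_cons_of_ne_nil hg
  have hm0 : t.length + 1 ≠ 0 := Nat.succ_ne_zero _
  have hdig : Nat.digits 10 (t.length + 1) ≠ [] := Nat.digits_ne_nil_iff_ne_zero.mpr hm0
  set k : ℕ := (Nat.digits 10 (t.length + 1)).getLast hdig with hkdef
  have hk : k ≠ 0 := Nat.getLast_digit_ne_zero 10 hm0
  have hklt : k < 10 := Nat.digits_lt_base (by norm_num) (List.getLast_mem hdig)
  set L : List (Fin 10) := (Nat.digits 10 (t.length + 1)).reverse.map
      (fun k => (⟨k % 10, Nat.mod_lt k d.pos⟩ : Fin 10)) with hL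
  have hrev : (Nat.digits 10 (t.length + 1)).reverse ≠ [] := by
    simp [hdig]
  have hLne : L ≠ [] := by simp [hL, hdig]
  -- head? of L
  have hLh : L.head? = some (⟨k % 10, Nat.mod_lt k d.pos⟩ : Fin 10) := by
    rw [hL, List.head?_map, List.head?_reverse, List.getLast?_eq_getLast hdig, ← hkdef,
      Option.map_some]
  have hrun : sayRun (d :: t) = L ++ ((List.replicate t.length L).flatten ++ [d]) := by
    simp only [sayRun, ← hL, List.replicate_succ, List.flatten_cons, List.append_assoc]
  have hsay : say T = L ++ (((List.replicate t.length L).flatten ++ [d])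
      ++ (gs.map sayRun).flatten) := by
    simp [say, hgs, hrun]
  have h1 : say T ≠ [] := say_ne_nil hT
  refine ⟨h1, ?_⟩
  have hh : (say T).head? = some (⟨k % 10, Nat.mod_lt k d.pos⟩ : Fin 10) := by
    rw [hsay, List.head?_append_of_ne_nil _ hLne, hLh]
  have hhead : (say T).head h1 = ⟨k % 10, Nat.mod_lt k d.pos⟩ := by
    have := List.head?_eq_head h1
    rw [this] at hh; exact Option.some.inj hh
  rw [hhead]
  simp [Fin.ext_iff, Nat.mod_eq_of_lt hklt, hk]

theorem descendant_head_ne_zero (S : List (Fin 10)) (hS : S ≠ [])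
    (n : ℕ) (hn : 1 ≤ n) :
    ∃ h : say^[n] S ≠ [], (say^[n] S).head h ≠ 0 := by
  have hiter : ∀ k, say^[k] S ≠ [] := by
    intro k
    induction k with
    | zero => exact hS
    | succ k ih => rw [Function.iterate_succ_apply']; exact say_ne_nil ih
  obtain ⟨m, rfl⟩ : ∃ m, n = m + 1 := ⟨n - 1, (Nat.succ_pred_eq_of_pos hn).symm⟩
  rw [Function.iterate_succ_apply']
  exact say_head (hiter m)
end

section
/- Let L and R be nonempty strings of digits such that the last digit of L is 0 and the first digit of R is not 0. Then the stuttering say-what-you-see operation applied to the concatenation factors as say(L ++ R) = say(L) ++ say(R). -/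
private theorem splitByLoop_eq_append' {α : Type*} {r : α → α → Bool} {l : List α} {a : α}
    {g : List α} (gs : List (List α)) :
    List.splitBy.loop r l a g gs = gs.reverse ++ List.splitBy.loop r l a g [] := by
  induction l generalizing a g gs with
  | nil => simp [List.splitBy.loop]
  | cons b l IH =>
    simp_rw [List.splitBy.loop]
    split <;> rw [IH]
    conv_rhs => rw [IH]
    simp

private theorem splitByLoop_append {α : Type*} {r : α → α → Bool} {b : α} {l' : List α} :
    ∀ (l : List α) (a : α) (g : List α),
      r ((a :: l).getLast (List.cons_ne_nil a l)) b = false →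
      List.splitBy.loop r (l ++ b :: l') a g [] =
        List.splitBy.loop r l a g [] ++ List.splitBy.loop r l' b [] [] := by
  intro l
  induction l with
  | nil =>
    intro a g h
    simp only [List.getLast_singleton] at h
    simp only [List.nil_append, List.splitBy.loop, h]
    rw [splitByLoop_eq_append' [(a :: g).reverse]]

  | cons c cs IH =>
    intro a g h
    rw [List.getLast_cons (List.cons_ne_nil c cs)] at h
    cases hr : r a c with
    | true =>
      simp only [List.cons_append, List.splitBy.loop, hr, List.append_eq]
      exact IH c (a :: g) h
    | false =>
      simp only [List.cons_append, List.splitBy.loop, hr, List.append_eq]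
      rw [splitByLoop_eq_append' [(a :: g).reverse], IH c [] h,
        splitByLoop_eq_append' (gs := [(a :: g).reverse]) (l := cs)]
      simp

private theorem splitBy_append {α : Type*} {r : α → α → Bool} (L R : List α) (hL : L ≠ [])
    (hR : R ≠ []) (h : r (L.getLast hL) (R.head hR) = false) :
    (L ++ R).splitBy r = L.splitBy r ++ R.splitBy r := by
  obtain ⟨a, l, rfl⟩ := List.exists_cons_of_ne_nil hL
  obtain ⟨b, l', rfl⟩ := List.exists_cons_of_ne_nil hR
  simp only [List.head_cons] at h
  show List.splitBy.loop r (l ++ b :: l') a [] [] = _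
  rw [splitByLoop_append l a [] (by simpa using h)]
  rfl

theorem say_append_of_zero_split (L R : List (Fin 10)) (hL : L ≠ []) (hR : R ≠ [])
    (hL0 : L.getLast hL = 0) (hR0 : R.head hR ≠ 0) :
    say (L ++ R) = say L ++ say R := by
  unfold say
  rw [splitBy_append L R hL hR, List.map_append, List.flatten_append]
  simp only [beq_eq_false_iff_ne, ne_eq, hL0]
  exact fun h => hR0 h.symm
end

section
/- Let L₁, L₂, …, L_k (k ≥ 1) be nonempty strings of digits such that for each i < k the last digit of L_i is 0, and for each i > 1 the first digit of L_i is not 0. Then for every natural number n, the n-th descendant of the concatenation L₁ ++ L₂ ++ ⋯ ++ L_k equals the concatenation say^[n](L₁) ++ say^[n](L₂) ++ ⋯ ++ say^[n](L_k). -/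
namespace SplitAux

open List

theorem splitByLoop_eq_append' {α : Type*} {r : α → α → Bool} {l : List α} {a : α} {g : List α}
    (gs : List (List α)) : splitBy.loop r l a g gs = gs.reverse ++ splitBy.loop r l a g [] := by
  induction l generalizing a g gs with
  | nil => simp [splitBy.loop]
  | cons b l IH =>
    simp_rw [splitBy.loop]
    split <;> rw [IH]
    conv_rhs => rw [IH]
    simp

theorem splitByLoop_append {α : Type*} {r : α → α → Bool} {B : List α} {b : α} :
    ∀ (l : List α) (a : α) (g : List α),
    r ((a :: l).getLast (cons_ne_nil _ _)) b = false →
    splitBy.loop r (l ++ b :: B) a g [] =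
      splitBy.loop r l a g [] ++ splitBy.loop r B b [] [] := by
  intro l
  induction l with
  | nil =>
    intro a g h
    simp only [getLast_singleton] at h
    simp only [nil_append]
    rw [splitBy.loop, h, splitByLoop_eq_append' [(a :: g).reverse]]
    simp [splitBy.loop]
  | cons c l IH =>
    intro a g h
    have hlast : (c :: l).getLast (cons_ne_nil _ _) = (a :: c :: l).getLast (cons_ne_nil _ _) := by
      rw [getLast_cons (cons_ne_nil _ _)]
    simp only [cons_append]
    rw [splitBy.loop]
    cases hr : r a c with
    | true =>
      simp only
      rw [IH c (a :: g) (hlast ▸ h)]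
      rw [show splitBy.loop r (c :: l) a g [] = splitBy.loop r l c (a :: g) [] by
        rw [splitBy.loop, hr]]
    | false =>
      simp only
      rw [splitByLoop_eq_append' [(a :: g).reverse], IH c [] (hlast ▸ h)]
      rw [show splitBy.loop r (c :: l) a g [] = splitBy.loop r l c [] [(a :: g).reverse] by
        rw [splitBy.loop, hr]]
      rw [splitByLoop_eq_append' [(a :: g).reverse]]
      simp

theorem splitBy_append {α : Type*} {r : α → α → Bool} {A B : List α} (hA : A ≠ []) (hB : B ≠ [])
    (h : r (A.getLast hA) (B.head hB) = false) :
    (A ++ B).splitBy r = A.splitBy r ++ B.splitBy r := by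
  obtain ⟨a, A', rfl⟩ := exists_cons_of_ne_nil hA
  obtain ⟨b, B', rfl⟩ := exists_cons_of_ne_nil hB
  simp only [head_cons] at h
  show splitBy.loop r (A' ++ b :: B') a [] [] = _
  rw [splitByLoop_append A' a [] h]
  rfl

/-- groups produced by `splitBy (· == ·)` are constant, so last = head -/
theorem getLast?_eq_head?_of_mem_splitBy {α : Type*} [BEq α] [LawfulBEq α] {g A : List α}
    (hg : g ∈ A.splitBy (· == ·)) : g.getLast? = g.head? := by
  have hc := isChain_of_mem_splitBy hg
  have : ∀ (t : List α), t.IsChain (fun x y => (x == y) = true) → t.getLast? = t.head? := by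
    intro t ht
    induction t with
    | nil => rfl
    | cons x t IH =>
      cases t with
      | nil => rfl
      | cons y t =>
        rw [isChain_cons_cons] at ht
        have h1 : x = y := by simpa using ht.1
        rw [getLast?_cons_cons, IH ht.2, head?_cons, head?_cons, h1]
  exact this g hc

theorem sayRun_ne_nil {b : ℕ} {g : List (Fin b)} (hg : g ≠ []) : sayRun g ≠ [] := by
  obtain ⟨d, t, rfl⟩ := exists_cons_of_ne_nil hg
  simp [sayRun]

theorem sayRun_getLast? {b : ℕ} {g : List (Fin b)} (hg : g ≠ []) :
    (sayRun g).getLast? = g.head? := by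
  obtain ⟨d, t, rfl⟩ := exists_cons_of_ne_nil hg
  simp [sayRun]

theorem flat_aux {b : ℕ} : ∀ gs : List (List (Fin b)), (∀ g ∈ gs, g ≠ []) →
    (∀ g ∈ gs, g.getLast? = g.head?) →
    ((gs.map sayRun).flatten).getLast? = gs.flatten.getLast? := by
  intro gs
  induction gs with
  | nil => simp
  | cons g gs IH =>
    intro h1 h2
    simp only [map_cons, flatten_cons, getLast?_append]
    rw [IH (fun x hx => h1 x (by simp [hx])) (fun x hx => h2 x (by simp [hx]))]
    congr 1
    rw [sayRun_getLast? (h1 g (by simp)), h2 g (by simp)]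

theorem say_getLast? {b : ℕ} (A : List (Fin b)) : (say A).getLast? = A.getLast? := by
  conv_rhs => rw [← flatten_splitBy (· == ·) A]
  exact flat_aux _ (fun g hg => ne_nil_of_mem_splitBy hg)
    (fun g hg => getLast?_eq_head?_of_mem_splitBy hg)

theorem say_ne_nil {b : ℕ} {A : List (Fin b)} (hA : A ≠ []) : say A ≠ [] := by
  intro h
  have := say_getLast? A
  rw [h] at this
  rw [getLast?_eq_getLast hA] at this
  simp at this

theorem say_head?_ne_zero {A : List (Fin 10)} (hA : A ≠ []) : (say A).head? ≠ some 0 := by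
  unfold say
  have hfl : (A.splitBy (· == ·)).flatten = A := flatten_splitBy _ _
  cases hG : A.splitBy (· == ·) with
  | nil => rw [hG] at hfl; simp at hfl; exact absurd hfl hA
  | cons g gs =>
    have hgne : g ≠ [] := ne_nil_of_mem_splitBy (r := (· == ·)) (l := A) (by rw [hG]; simp)
    obtain ⟨d, t, rfl⟩ := List.exists_cons_of_ne_nil hgne
    simp only [map_cons, flatten_cons, head?_append]
    have hd : (Nat.digits 10 (t.length + 1)) ≠ [] :=
      Nat.digits_ne_nil_iff_ne_zero.mpr (Nat.succ_ne_zero _)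
    rw [sayRun]
    set f : ℕ → Fin 10 := fun k => (⟨k % 10, Nat.mod_lt k d.pos⟩ : Fin 10) with hf
    rw [head?_append, replicate_succ, flatten_cons, head?_append, head?_map, head?_reverse,
      getLast?_eq_getLast hd]
    set m := (Nat.digits 10 (t.length + 1)).getLast hd with hm
    have hm0 : m ≠ 0 := Nat.getLast_digit_ne_zero 10 (Nat.succ_ne_zero _)
    have hmlt : m < 10 := Nat.digits_lt_base (by norm_num) (getLast_mem hd)
    first | simp only [Option.map_some] | simp only [Option.map_some']
    rw [show ((some ((⟨m % 10, Nat.mod_lt m d.pos⟩ : Fin 10))).or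
      (replicate t.length ((Nat.digits 10 (t.length + 1)).reverse.map f)).flatten.head?) =
      some (⟨m % 10, Nat.mod_lt m d.pos⟩ : Fin 10) from rfl]
    rw [show ((some ((⟨m % 10, Nat.mod_lt m d.pos⟩ : Fin 10))).or [d].head?) =
      some (⟨m % 10, Nat.mod_lt m d.pos⟩ : Fin 10) from rfl]
    rw [show ((some ((⟨m % 10, Nat.mod_lt m d.pos⟩ : Fin 10))).or
      ((gs.map sayRun).flatten).head?) =
      some (⟨m % 10, Nat.mod_lt m d.pos⟩ : Fin 10) from rfl]
    intro hcontra
    have hval : m % 10 = 0 := congrArg Fin.val (Option.some_inj.mp hcontra)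
    rw [Nat.mod_eq_of_lt hmlt] at hval
    exact hm0 hval

theorem say_append {A B : List (Fin 10)} (hA : A ≠ []) (hB : B ≠ [])
    (hlast : A.getLast? = some 0) (hhead : B.head? ≠ some 0) :
    say (A ++ B) = say A ++ say B := by
  have h : ((A.getLast hA : Fin 10) == B.head hB) = false := by
    rw [beq_eq_false_iff_ne]
    intro he
    rw [getLast?_eq_getLast hA] at hlast
    rw [head?_eq_head hB] at hhead
    apply hhead
    rw [← he, Option.some_inj.mp hlast]
  unfold say
  rw [splitBy_append hA hB h, map_append, flatten_append]

/-- one-step distribution over a list of blocks -/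
theorem say_flatten : ∀ (L : List (List (Fin 10))),
    (∀ l ∈ L, l ≠ []) →
    (∀ i (hi : i + 1 < L.length), (L[i]'(Nat.lt_of_succ_lt hi)).getLast? = some 0) →
    (∀ i (hi : i < L.length), 0 < i → (L[i]'hi).head? ≠ some 0) →
    say L.flatten = (L.map say).flatten := by
  intro L
  induction L with
  | nil => intro _ _ _; rfl
  | cons A rest IH =>
    intro hne hlast hfirst
    cases rest with
    | nil => simp
    | cons B rest' =>
      have hAne : A ≠ [] := hne A (by simp)
      have hBne : B ≠ [] := hne B (by simp)
      have hB0 : B.head? ≠ some 0 := by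
        have := hfirst 1 (by simp) (by norm_num)
        simpa using this
      have hhd : (B :: rest').flatten.head? = some (B.head hBne) := by
        rw [flatten_cons, head?_append, head?_eq_head hBne]; rfl
      have hrfl : (B :: rest').flatten ≠ [] := by
        intro h; rw [h] at hhd; simp at hhd
      have hrhead : (B :: rest').flatten.head? ≠ some 0 := by
        rw [hhd, ← head?_eq_head hBne]; exact hB0
      have hA0 : A.getLast? = some 0 := hlast 0 (by simp)
      show say (A ++ (B :: rest').flatten) = _
      rw [say_append hAne hrfl hA0 hrhead]
      rw [IH (fun l hl => hne l (by simp [hl]))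
          (fun i hi => hlast (i + 1) (by simpa using hi))
          (fun i hi _ => by
            have := hfirst (i + 1) (by simpa using hi) (by positivity)
            simpa using this)]
      simp

end SplitAux

theorem splitting_many (L : List (List (Fin 10))) (hk : L ≠ [])
    (hne : ∀ l ∈ L, l ≠ [])
    (hlast : ∀ i (hi : i + 1 < L.length),
      (L[i]'(Nat.lt_of_succ_lt hi)).getLast? = some 0)
    (hfirst : ∀ i (hi : i < L.length), 0 < i → (L[i]'hi).head? ≠ some 0)
    (n : ℕ) :
    say^[n] L.flatten = (L.map (fun l => say^[n] l)).flatten := by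
  clear hk
  induction n generalizing L with
  | zero => simp
  | succ n IH =>
    simp only [Function.iterate_succ_apply]
    rw [SplitAux.say_flatten L hne hlast hfirst]
    have hne' : ∀ l ∈ L.map say, l ≠ [] := by
      intro l hl
      obtain ⟨x, hx, rfl⟩ := List.mem_map.mp hl
      exact SplitAux.say_ne_nil (hne x hx)
    have hlast' : ∀ i (hi : i + 1 < (L.map say).length),
        ((L.map say)[i]'(Nat.lt_of_succ_lt hi)).getLast? = some 0 := by
      intro i hi
      rw [List.length_map] at hi
      simp only [List.getElem_map, SplitAux.say_getLast?]
      exact hlast i hi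
    have hfirst' : ∀ i (hi : i < (L.map say).length), 0 < i →
        ((L.map say)[i]'hi).head? ≠ some 0 := by
      intro i hi hpos
      rw [List.length_map] at hi
      simp only [List.getElem_map]
      exact SplitAux.say_head?_ne_zero (hne _ (List.getElem_mem hi))
    have := IH (L.map say) hne' hlast' hfirst'
    rw [this, List.map_map]
    rfl
end

section
/- Let E be the string of digits consisting of ten 9's, nine 8's, eight 7's, seven 6's, six 5's, five 4's, four 3's, three 2's, two 1's, and one 0, in that order (E = 9^{10} 8^9 7^8 6^7 5^6 4^5 3^4 2^3 1^2 0). Then say(E) = (10)^{10} ++ E, i.e. the say-image of E is the string consisting of the two digits 1,0 repeated ten times followed by E itself. -/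
/-- The end element \`E = 9^10 8^9 7^8 6^7 5^6 4^5 3^4 2^3 1^2 0\`. -/
def E : List (Fin 10) :=
  List.replicate 10 9 ++ List.replicate 9 8 ++ List.replicate 8 7 ++
  List.replicate 7 6 ++ List.replicate 6 5 ++ List.replicate 5 4 ++
  List.replicate 4 3 ++ List.replicate 3 2 ++ List.replicate 2 1 ++ [0]

theorem say_E : say E = (List.replicate 10 ([1, 0] : List (Fin 10))).flatten ++ E := by
  have hs : E.splitBy (· == ·) =
      [List.replicate 10 9, List.replicate 9 8, List.replicate 8 7,
       List.replicate 7 6, List.replicate 6 5, List.replicate 5 4,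
       List.replicate 4 3, List.replicate 3 2, List.replicate 2 1, [0]] := by decide
  rw [say, hs]
  norm_num [sayRun, List.replicate, Nat.digits_def']
  decide
end

section
/- Let E be the string of digits E = 9^{10} 8^9 7^8 6^7 5^6 4^5 3^4 2^3 1^2 0 (ten 9's, nine 8's, eight 7's, seven 6's, six 5's, five 4's, four 3's, three 2's, two 1's, one 0). Then for every natural number n, the n-th descendant say^[n](E) ends with E, i.e. there exists a string P with say^[n](E) = P ++ E. Consequently, every term of a stuttering look and say sequence whose seed ends with E also ends with E. -/
namespace SayAux

theorem loop_nil {α : Type*} (R : α → α → Bool) (x : α) (g : List α) (gs : List (List α)) :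
    List.splitBy.loop R [] x g gs = gs.reverse ++ [(x :: g).reverse] := by
  show ((x :: g).reverse :: gs).reverse = _
  simp

theorem loop_cons {α : Type*} (R : α → α → Bool) (a : α) (as : List α) (x : α) (g : List α)
    (gs : List (List α)) :
    List.splitBy.loop R (a :: as) x g gs =
      bif R x a then List.splitBy.loop R as a (x :: g) gs
      else List.splitBy.loop R as a [] ((x :: g).reverse :: gs) := by
  simp only [List.splitBy.loop]
  cases R x a <;> rfl

/-- Pull the accumulated groups out of `splitBy.loop`. -/
theorem loop_eq {α : Type*} (R : α → α → Bool) (l : List α) (x : α) (g : List α)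
    (gs : List (List α)) :
    List.splitBy.loop R l x g gs = gs.reverse ++ List.splitBy.loop R l x g [] := by
  induction l generalizing x g gs with
  | nil => rw [loop_nil, loop_nil]; simp
  | cons a as ih =>
    rw [loop_cons, loop_cons]
    cases h : R x a with
    | true => simp only [cond_true]; exact ih a (x :: g) gs
    | false =>
      simp only [cond_false]
      rw [ih a [] ((x :: g).reverse :: gs), ih a [] [(x :: g).reverse]]
      simp

theorem loop_append {α : Type*} (R : α → α → Bool) (l₁ : List α) (a b : α) (l₂ : List α)
    (h : R a b = false) :
    ∀ (x : α) (g : List α) (gs : List (List α)),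
      List.splitBy.loop R ((l₁ ++ [a]) ++ b :: l₂) x g gs =
        List.splitBy.loop R (l₁ ++ [a]) x g gs ++ List.splitBy R (b :: l₂) := by
  have hsb : List.splitBy R (b :: l₂) = List.splitBy.loop R l₂ b [] [] := rfl
  induction l₁ with
  | nil =>
    intro x g gs
    simp only [List.nil_append, List.cons_append]
    rw [loop_cons]
    cases hxa : R x a with
    | true =>
      simp only [cond_true]
      rw [loop_cons, h, cond_false, loop_cons, hxa, cond_true, loop_nil,
        loop_eq R l₂ b [] ((a :: x :: g).reverse :: gs), hsb]
      simp
    | false =>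
      simp only [cond_false]
      rw [loop_cons, h, cond_false, loop_cons, hxa, cond_false, loop_nil,
        loop_eq R l₂ b [] _, hsb]
      simp
  | cons c l₁' ih =>
    intro x g gs
    simp only [List.cons_append]
    rw [loop_cons, loop_cons]
    cases hxc : R x c with
    | true => simp only [cond_true]; exact ih c (x :: g) gs
    | false => simp only [cond_false]; exact ih c [] ((x :: g).reverse :: gs)

theorem splitBy_append {α : Type*} (R : α → α → Bool) (l₁ : List α) (a b : α) (l₂ : List α)
    (h : R a b = false) :
    List.splitBy R ((l₁ ++ [a]) ++ b :: l₂) =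
      List.splitBy R (l₁ ++ [a]) ++ List.splitBy R (b :: l₂) := by
  cases l₁ with
  | nil =>
    show List.splitBy.loop R (b :: l₂) a [] [] =
      List.splitBy.loop R [] a [] [] ++ List.splitBy.loop R l₂ b [] []
    rw [loop_cons, h, cond_false, loop_nil, loop_eq R l₂ b [] _]
    simp
  | cons x s =>
    show List.splitBy.loop R ((s ++ [a]) ++ b :: l₂) x [] [] = _
    rw [loop_append R s a b l₂ h x [] []]
    rfl

theorem say_append {n : ℕ} (A : List (Fin n)) (x y : Fin n) (B : List (Fin n)) (h : x ≠ y) :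
    say ((A ++ [x]) ++ y :: B) = say (A ++ [x]) ++ say (y :: B) := by
  unfold say
  rw [splitBy_append _ A x y B (by simpa using h)]
  simp

theorem loop_replicate {n : ℕ} (d : Fin n) :
    ∀ (k : ℕ) (g : List (Fin n)) (gs : List (List (Fin n))),
      List.splitBy.loop (· == ·) (List.replicate k d) d g gs =
        gs.reverse ++ [g.reverse ++ List.replicate (k + 1) d] := by
  intro k
  induction k with
  | zero => intro g gs; rw [List.replicate_zero, loop_nil]; simp [List.replicate]
  | succ k ih =>
    intro g gs
    rw [List.replicate_succ, loop_cons, beq_self_eq_true, cond_true, ih (d :: g) gs]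
    simp only [List.reverse_cons, List.append_assoc, List.singleton_append,
      ← List.replicate_succ]

theorem splitBy_replicate {n : ℕ} (k : ℕ) (d : Fin n) :
    List.splitBy (· == ·) (List.replicate (k + 1) d) = [List.replicate (k + 1) d] := by
  rw [List.replicate_succ]
  show List.splitBy.loop (· == ·) (List.replicate k d) d [] [] = _
  rw [loop_replicate d k [] []]
  simp [List.replicate_succ]

theorem say_replicate {n : ℕ} (k : ℕ) (d : Fin n) :
    say (List.replicate (k + 1) d) =
      (List.replicate (k + 1)
        ((Nat.digits n (k + 1)).reverse.map
          (fun j => (⟨j % n, Nat.mod_lt j d.pos⟩ : Fin n)))).flatten ++ [d] := by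
  unfold say
  rw [splitBy_replicate]
  rw [List.replicate_succ]
  simp [sayRun]

/-- The tail of `E` after the run of nines. -/
def E' : List (Fin 10) :=
  List.replicate 9 8 ++ List.replicate 8 7 ++
  List.replicate 7 6 ++ List.replicate 6 5 ++ List.replicate 5 4 ++
  List.replicate 4 3 ++ List.replicate 3 2 ++ List.replicate 2 1 ++ [0]

theorem E_eq : E = List.replicate 10 9 ++ E' := by decide

theorem E'_cons : E' = (8 : Fin 10) :: E'.tail := by decide

theorem say_E' : say E' = List.replicate 9 9 ++ E' := by
  have h : E'.splitBy (· == ·) = [List.replicate 9 8, List.replicate 8 7,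
      List.replicate 7 6, List.replicate 6 5, List.replicate 5 4,
      List.replicate 4 3, List.replicate 3 2, List.replicate 2 1, [0]] := by decide
  show ((E'.splitBy (· == ·)).map sayRun).flatten = _
  rw [h]
  simp [sayRun, List.replicate]
  decide

theorem base (k : ℕ) : ∃ P, say (List.replicate (k + 10) 9 ++ E') = P ++ E := by
  have h1 : List.replicate (k + 10) (9 : Fin 10) ++ E' =
      (List.replicate (k + 9) (9 : Fin 10) ++ [9]) ++ (8 : Fin 10) :: E'.tail := by
    rw [← (List.replicate_succ' : List.replicate (k + 9 + 1) (9 : Fin 10) = _), ← E'_cons]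
  rw [h1, say_append _ _ _ _ (by decide), ← List.replicate_succ', ← E'_cons,
    say_replicate (k + 9) 9, say_E']
  refine ⟨(List.replicate (k + 9 + 1)
    ((Nat.digits 10 (k + 9 + 1)).reverse.map
      (fun j => (⟨j % 10, Nat.mod_lt j (by norm_num)⟩ : Fin 10)))).flatten, ?_⟩
  rw [E_eq]
  have h9 : (9 : Fin 10) :: List.replicate 9 9 = List.replicate 10 9 := by decide
  simp only [List.append_assoc, List.singleton_append]
  rw [← List.cons_append, h9]

theorem step (Q : List (Fin 10)) :
    ∀ k : ℕ, ∃ P, say (Q ++ (List.replicate (k + 10) 9 ++ E')) = P ++ E := by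
  induction Q using List.reverseRecOn with
  | nil => intro k; rw [List.nil_append]; exact base k
  | append_singleton Q a ih =>
    intro k
    by_cases ha : a = 9
    · subst ha
      have hrep : List.replicate (k + 1 + 10) (9 : Fin 10) = 9 :: List.replicate (k + 10) 9 := by
        rw [show k + 1 + 10 = (k + 10) + 1 from by ring]
        exact List.replicate_succ
      have h : (Q ++ [(9 : Fin 10)]) ++ (List.replicate (k + 10) 9 ++ E') =
          Q ++ (List.replicate (k + 1 + 10) 9 ++ E') := by
        rw [hrep]
        simp
      rw [h]
      exact ih (k + 1)
    · have h2 : List.replicate (k + 10) (9 : Fin 10) ++ E' =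
          (9 : Fin 10) :: (List.replicate (k + 9) 9 ++ E') := by
        rw [show k + 10 = (k + 9) + 1 from by ring, List.replicate_succ, List.cons_append]
      rw [h2, say_append Q a 9 _ ha]
      obtain ⟨P, hP⟩ := base k
      rw [h2] at hP
      exact ⟨say (Q ++ [a]) ++ P, by rw [hP, List.append_assoc]⟩

theorem perstep (S : List (Fin 10)) (h : ∃ Q, S = Q ++ E) : ∃ P, say S = P ++ E := by
  obtain ⟨Q, rfl⟩ := h
  have h10 : List.replicate 10 (9 : Fin 10) = List.replicate (0 + 10) 9 := by norm_num
  rw [E_eq, h10]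
  exact step Q 0

end SayAux

theorem descendants_end_with_E :
    (∀ n : ℕ, ∃ P : List (Fin 10), say^[n] E = P ++ E) ∧
    (∀ S : List (Fin 10), (∃ Q : List (Fin 10), S = Q ++ E) →
      ∀ n : ℕ, ∃ P : List (Fin 10), say^[n] S = P ++ E) := by
  have main : ∀ S : List (Fin 10), (∃ Q : List (Fin 10), S = Q ++ E) →
      ∀ n : ℕ, ∃ P : List (Fin 10), say^[n] S = P ++ E := by
    intro S hS n
    induction n with
    | zero =>
      obtain ⟨Q, hQ⟩ := hS
      exact ⟨Q, by simpa using hQ⟩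
    | succ n ih =>
      obtain ⟨P, hP⟩ := ih
      rw [Function.iterate_succ_apply']
      exact SayAux.perstep _ ⟨P, hP⟩
  exact ⟨fun n => main E ⟨[], rfl⟩ n, main⟩
end

section
/- Let d be a digit with 2 ≤ d ≤ 9. Then for every natural number n, the n-th descendant of the one-digit string [d] is obtained from the n-th descendant of the one-digit string [0] by replacing its final digit (which is 0) by d; that is, say^[n]([d]) = (say^[n]([0])).dropLast ++ [d]. -/
lemma splitBy_loop_append_single {α : Type*} (R : α → α → Bool) (x : α) :
    ∀ (l : List α) (ag : α) (g : List α) (gs : List (List α)),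
      R ((ag :: l).getLast (by simp)) x = false →
      List.splitBy.loop R (l ++ [x]) ag g gs =
        List.splitBy.loop R l ag g gs ++ [[x]] := by
  intro l
  induction l with
  | nil =>
    intro ag g gs h
    simp only [List.getLast_singleton] at h
    simp [List.splitBy.loop, h]
  | cons a as ih =>
    intro ag g gs h
    have h' : R ((a :: as).getLast (by simp)) x = false := by
      rwa [List.getLast_cons (by simp)] at h
    simp only [List.cons_append, List.splitBy.loop]
    cases R ag a <;> simp [ih _ _ _ h']

lemma splitBy_append_single {α : Type*} (R : α → α → Bool) (x : α)
    (A : List α) (hA : A ≠ []) (h : R (A.getLast hA) x = false) :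
    List.splitBy R (A ++ [x]) = List.splitBy R A ++ [[x]] := by
  cases A with
  | nil => simp at hA
  | cons a l =>
    simp only [List.cons_append, List.splitBy]
    exact splitBy_loop_append_single R x l a [] [] h

lemma sayRun_single (x : Fin 10) : sayRun [x] = [1, x] := by
  have hdig : Nat.digits 10 1 = [1] := by simp
  simp only [sayRun, List.length_nil, hdig]
  norm_num

lemma say_single (x : Fin 10) : say [x] = [1, x] := by
  have : List.splitBy (· == ·) [x] = [[x]] := rfl
  simp [say, this, sayRun_single]

lemma say_append_single (A : List (Fin 10)) (hA : A ≠ []) (x : Fin 10)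
    (h : A.getLast hA ≠ x) :
    say (A ++ [x]) = say A ++ [1, x] := by
  have hb : ((A.getLast hA == x) : Bool) = false := by
    simpa using h
  rw [say, splitBy_append_single (· == ·) x A hA hb]
  simp [say, sayRun_single]

lemma key (d : Fin 10) (hd2 : 2 ≤ (d : ℕ)) (n : ℕ) :
    ∃ A : List (Fin 10), A.getLast? = some 1 ∧
      say^[n+1] [d] = A ++ [d] ∧ say^[n+1] ([0] : List (Fin 10)) = A ++ [0] := by
  have hd1 : d ≠ 1 := by
    intro h; rw [h] at hd2; norm_num at hd2
  induction n with
  | zero =>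
    exact ⟨[1], rfl, by simp [say_single], by simp [say_single]⟩
  | succ n ih =>
    obtain ⟨A, hlast, h1, h2⟩ := ih
    have hA : A ++ [(1 : Fin 10)] ≠ [] := by simp
    have hg : ∀ y : Fin 10, (A ++ [y]).getLast (by simp) = y := by
      intro y; simp
    have hne : (A ++ [(1:Fin 10)]).getLast hA ≠ d := by
      rw [hg]; exact fun h => hd1 h.symm
    have hne0 : (A ++ [(1:Fin 10)]).getLast hA ≠ 0 := by
      rw [hg]; decide
    have hA' : A ≠ [] := by
      intro h; rw [h] at hlast; simp at hlast
    have hAg : A.getLast hA' = 1 := (List.getLast_eq_iff_getLast?_eq_some hA').2 hlast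
    have hned : A.getLast hA' ≠ d := by rw [hAg]; exact fun h => hd1 h.symm
    have hne0' : A.getLast hA' ≠ 0 := by rw [hAg]; decide
    refine ⟨say A ++ [1], ?_, ?_, ?_⟩
    · simp
    · rw [Function.iterate_succ_apply', h1, say_append_single A hA' d hned]
      simp
    · rw [Function.iterate_succ_apply', h2, say_append_single A hA' 0 hne0']
      simp

theorem descendant_of_digit_seed (d : Fin 10) (hd2 : 2 ≤ (d : ℕ)) (hd9 : (d : ℕ) ≤ 9)
    (n : ℕ) :
    say^[n] [d] = (say^[n] ([0] : List (Fin 10))).dropLast ++ [d] := by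
  cases n with
  | zero => simp
  | succ n =>
    obtain ⟨A, _, h1, h2⟩ := key d hd2 n
    rw [h1, h2, List.dropLast_concat]
end

section
/- Fix an integer base b ≥ 2. Let L and R be nonempty strings of base-b digits such that the last digit of L is 0 and the first digit of R is not 0. Then for every natural number n, the n-th descendant under the base-b stuttering say-what-you-see operation satisfies say_b^[n](L ++ R) = say_b^[n](L) ++ say_b^[n](R). -/
namespace StutterAux

open List

variable {α : Type*}

private theorem loop_eq_append {r : α → α → Bool} {l : List α} {a : α} {g : List α}
    (gs : List (List α)) : splitBy.loop r l a g gs = gs.reverse ++ splitBy.loop r l a g [] := by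
  induction l generalizing a g gs with
  | nil => simp [splitBy.loop]
  | cons b l IH =>
    simp_rw [splitBy.loop]
    split <;> rw [IH]
    conv_rhs => rw [IH]
    simp

private theorem loop_append (r : α → α → Bool) (x : α) (l₂ : List α) :
    ∀ (l : List α) (a : α) (g : List α),
      r ((a :: l).getLast (cons_ne_nil a l)) x = false →
      splitBy.loop r (l ++ x :: l₂) a g [] =
        splitBy.loop r l a g [] ++ splitBy r (x :: l₂) := by
  intro l
  induction l with
  | nil =>
    intro a g h
    simp only [getLast_singleton] at h
    simp only [nil_append, splitBy.loop, h, splitBy]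
    exact loop_eq_append _
  | cons c l ih =>
    intro a g h
    rw [getLast_cons (cons_ne_nil c l)] at h
    cases hc : r a c
    · rw [cons_append, splitBy.loop, splitBy.loop]
      simp only [hc]
      rw [loop_eq_append, ih c [] h]
      conv_rhs => rw [loop_eq_append]
      simp
    · rw [cons_append, splitBy.loop, splitBy.loop]
      simp only [hc]
      exact ih c (a :: g) h

theorem splitBy_append (r : α → α → Bool) (L R : List α) (hL : L ≠ []) (hR : R ≠ [])
    (h : r (L.getLast hL) (R.head hR) = false) :
    (L ++ R).splitBy r = L.splitBy r ++ R.splitBy r := by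
  cases L with
  | nil => exact absurd rfl hL
  | cons a l =>
    cases R with
    | nil => exact absurd rfl hR
    | cons x l₂ =>
      simp only [cons_append, splitBy]
      exact loop_append r x l₂ l a [] h

theorem chain'_eq_getLast?_eq_head? {l : List α} (h : l.Chain' (· = ·)) :
    l.getLast? = l.head? := by
  induction l with
  | nil => rfl
  | cons a t ih =>
    cases t with
    | nil => rfl
    | cons b t =>
      obtain ⟨hab, h'⟩ := List.isChain_cons_cons.mp h
      rw [List.getLast?_cons_cons, ih h', List.head?_cons, List.head?_cons, hab]

theorem say_append {b : ℕ} (L R : List (Fin b)) (hL : L ≠ []) (hR : R ≠ [])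
    (h : L.getLast hL ≠ R.head hR) :
    say (L ++ R) = say L ++ say R := by
  unfold say
  rw [splitBy_append _ L R hL hR (beq_eq_false_iff_ne.mpr h), map_append, flatten_append]

theorem sayRun_ne_nil {b : ℕ} (g : List (Fin b)) (hg : g ≠ []) : sayRun g ≠ [] := by
  cases g with
  | nil => exact absurd rfl hg
  | cons d t => simp [sayRun]

theorem getLast?_sayRun {b : ℕ} (g : List (Fin b)) : (sayRun g).getLast? = g.head? := by
  cases g with
  | nil => rfl
  | cons d t => simp [sayRun]

theorem getLast?_say {b : ℕ} (M : List (Fin b)) : (say M).getLast? = M.getLast? := by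
  rcases eq_nil_or_concat (M.splitBy (· == ·)) with hgs | ⟨gs, g, hgs⟩
  · have : M = [] := by
      have := flatten_splitBy (· == ·) M
      rw [hgs] at this
      simpa using this.symm
    subst this; rfl
  · have hgmem : g ∈ M.splitBy (· == ·) := by rw [hgs]; simp
    have hgne : g ≠ [] := ne_nil_of_mem_splitBy hgmem
    have hchain : g.Chain' (· = ·) := by
      have := isChain_of_mem_splitBy hgmem
      exact this.imp (fun x y hxy => by simpa using hxy)
    have hM : M = (M.splitBy (· == ·)).flatten := (flatten_splitBy _ M).symm
    rw [say, hgs]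
    simp only [concat_eq_append, map_append, flatten_append, map_cons, map_nil,
      flatten_cons, flatten_nil, append_nil]
    rw [getLast?_append, getLast?_sayRun,
      ← chain'_eq_getLast?_eq_head? hchain]
    conv_rhs => rw [hM, hgs]
    rw [concat_eq_append, flatten_append]
    rw [getLast?_append]
    have hs : g.getLast?.isSome := getLast?_isSome.mpr hgne
    rw [Option.or_of_isSome hs]
    simp only [flatten_cons, flatten_nil, append_nil]
    rw [Option.or_of_isSome hs]

theorem say_ne_nil {b : ℕ} (M : List (Fin b)) (hM : M ≠ []) : say M ≠ [] := by
  intro h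
  have := getLast?_say M
  rw [h] at this
  simp only [getLast?_nil] at this
  exact hM (getLast?_eq_none_iff.mp this.symm)

theorem head_say_ne_zero {b : ℕ} (hb : 2 ≤ b) (M : List (Fin b)) (hM : M ≠ [])
    (h : Fin b) (hh : (say M).head? = some h) : (h : ℕ) ≠ 0 := by
  have hsplit : M.splitBy (· == ·) ≠ [] := by
    intro hc
    have := flatten_splitBy (fun x y : Fin b => x == y) M
    rw [hc] at this
    exact hM this.symm
  obtain ⟨g, gs, hgs⟩ := exists_cons_of_ne_nil hsplit
  have hgne : g ≠ [] := ne_nil_of_mem_splitBy (by rw [hgs]; exact mem_cons_self)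
  obtain ⟨d, t, rfl⟩ := exists_cons_of_ne_nil hgne
  have hdig : Nat.digits b (t.length + 1) ≠ [] :=
    Nat.digits_ne_nil_iff_ne_zero.mpr (by omega)
  have hrevne : (Nat.digits b (t.length + 1)).reverse ≠ [] := by
    simpa using hdig
  obtain ⟨k, ds, hrev⟩ := exists_cons_of_ne_nil hrevne
  have hk : (Nat.digits b (t.length + 1)).getLast? = some k := by
    rw [← head?_reverse, hrev, head?_cons]
  have hkne : k ≠ 0 := by
    have := Nat.getLast_digit_ne_zero b (m := t.length + 1) (by omega)
    rw [getLast?_eq_getLast hdig, Option.some_inj] at hk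
    rw [← hk]
    exact Nat.getLast_digit_ne_zero b (m := t.length + 1) (by omega)
  have hklt : k < b := by
    refine Nat.digits_lt_base (m := t.length + 1) (by omega) ?_
    have : k ∈ (Nat.digits b (t.length + 1)).reverse := by rw [hrev]; exact mem_cons_self
    simpa using this
  rw [say, hgs] at hh
  simp only [map_cons, flatten_cons] at hh
  rw [sayRun] at hh
  rw [replicate_succ, flatten_cons, hrev] at hh
  simp only [map_cons, cons_append, head?_cons, Option.some_inj] at hh
  subst hh
  simpa [Nat.mod_eq_of_lt hklt] using hkne

end StutterAux

theorem stuttering_splitting_base (b : ℕ) (hb : 2 ≤ b)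
    (L R : List (Fin b)) (hL : L ≠ []) (hR : R ≠ [])
    (hL0 : (L.getLast hL : ℕ) = 0) (hR0 : (R.head hR : ℕ) ≠ 0) (n : ℕ) :
    say^[n] (L ++ R) = say^[n] L ++ say^[n] R := by
  suffices H : ∀ m : ℕ, say^[m] (L ++ R) = say^[m] L ++ say^[m] R ∧
      (∃ dl : Fin b, (say^[m] L).getLast? = some dl ∧ (dl : ℕ) = 0) ∧
      (∃ dr : Fin b, (say^[m] R).head? = some dr ∧ (dr : ℕ) ≠ 0) from (H n).1
  intro m
  induction m with
  | zero =>
    refine ⟨rfl, ⟨L.getLast hL, ?_, hL0⟩, ⟨R.head hR, ?_, hR0⟩⟩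
    · exact List.getLast?_eq_getLast hL
    · exact List.head?_eq_head hR
  | succ m ih =>
    obtain ⟨heq, ⟨dl, hdl, hdl0⟩, ⟨dr, hdr, hdr0⟩⟩ := ih
    have hLne : say^[m] L ≠ [] := by
      intro hc; rw [hc] at hdl; simp at hdl
    have hRne : say^[m] R ≠ [] := by
      intro hc; rw [hc] at hdr; simp at hdr
    have hdl' : (say^[m] L).getLast hLne = dl := by
      rw [List.getLast?_eq_getLast hLne, Option.some_inj] at hdl; exact hdl
    have hdr' : (say^[m] R).head hRne = dr := by
      rw [List.head?_eq_head hRne, Option.some_inj] at hdr; exact hdr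
    have hne : (say^[m] L).getLast hLne ≠ (say^[m] R).head hRne := by
      rw [hdl', hdr']
      intro hc
      exact hdr0 (by rw [← hc, hdl0])
    have hsay : say (say^[m] L ++ say^[m] R) = say (say^[m] L) ++ say (say^[m] R) :=
      StutterAux.say_append _ _ hLne hRne hne
    have hLne' : say (say^[m] L) ≠ [] := StutterAux.say_ne_nil _ hLne
    have hRne' : say (say^[m] R) ≠ [] := StutterAux.say_ne_nil _ hRne
    refine ⟨?_, ⟨dl, ?_, hdl0⟩, ?_⟩
    · rw [Function.iterate_succ_apply', Function.iterate_succ_apply',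
        Function.iterate_succ_apply', heq, hsay]
    · rw [Function.iterate_succ_apply', StutterAux.getLast?_say, hdl]
    · obtain ⟨h, hs, hh⟩ := List.exists_cons_of_ne_nil hRne'
      refine ⟨h, ?_, ?_⟩
      · rw [Function.iterate_succ_apply', hh]; rfl
      · exact StutterAux.head_say_ne_zero hb _ hRne h (by rw [hh]; rfl)
end
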